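/- arXiv:1801.04233 — 2 statements merged into one kernel-verified Lean document; each statement's English description precedes it below -/
import Mathlib

section
/- Let (W,S) be a Coxeter system and v ∈ W. Then P^v = Σ_{u ≤ v} (−1)^{ℓ(u)} P̄^u in End(V_W), where P̄^u = (id − P^{{s₁}})⋯(id − P^{{s_k}}) for a reduced expression s₁⋯s_k of u. -/
open CoxeterSystem

variable {B W : Type*} [Group W] {M : CoxeterMatrix B}

/-- The projection `P^{{s}}` onto `W^{{s}}`: removes a trailing `s` if that shortens `w`. -/
noncomputable def CoxeterSystem.projSimple (cs : CoxeterSystem M W) (s : B) (w : W) : W :=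
  if cs.length (w * cs.simple s) < cs.length w then w * cs.simple s else w

/-- For a word `ω = s₁ ⋯ s_k`, the composition `P^{{s₁}} ∘ ⋯ ∘ P^{{s_k}}`. -/
noncomputable def CoxeterSystem.projWord (cs : CoxeterSystem M W) (ω : List B) : W → W :=
  ω.foldr (fun s g => cs.projSimple s ∘ g) id

/-- The Bruhat order, via the subword property: `u ≤ v` iff some reduced word for `v`
has a subword whose product is `u`. -/
def CoxeterSystem.bruhatLE (cs : CoxeterSystem M W) (u v : W) : Prop :=
  ∃ ω : List B, cs.IsReduced ω ∧ cs.wordProd ω = v ∧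
    ∃ ω' : List B, ω'.Sublist ω ∧ cs.wordProd ω' = u

/-- The linearized projection `P^{{s}}` on the free `ℤ`-module on `W`. -/
noncomputable def CoxeterSystem.projS (cs : CoxeterSystem M W) (s : B) :
    Module.End ℤ (W →₀ ℤ) :=
  Finsupp.lmapDomain ℤ ℤ (cs.projSimple s)

/-- For a word `ω = s₁ ⋯ s_k`, the endomorphism `(id − P^{{s₁}}) ⋯ (id − P^{{s_k}})`. -/
noncomputable def CoxeterSystem.projBarWord (cs : CoxeterSystem M W) (ω : List B) :
    Module.End ℤ (W →₀ ℤ) :=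
  ω.foldr (fun s g => (1 - cs.projS s) * g) 1

/-!
Write `P^ω` for the composite of the `P^{{s}}` along a word `ω` and `Sub ω` for the set of
products of subwords of `ω`. Since `P^{{s}} = 1 - (1 - P^{{s}})` and `1 - P^{{s}}` is idempotent,
`(1 - P^{{s}}) P̄^u = P̄^{s ⋆ u}`, where `s ⋆ u` is the Demazure product (the larger of `u`, `su`).
So by induction on `ω`, `P^ω = ∑_{u ∈ Sub ω} (-1)^{ℓ(u)} P̄^u`: in `P^{sω} = P^ω - (1 - P^{{s}}) P^ω`
the terms `u` with `su < u` cancel, and the others regroup, `u` and `su` having opposite signs,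
into the sum over `Sub (sω) = Sub ω ∪ s Sub ω`.

For a reduced word `ω`, `Sub ω` is the Bruhat interval below `π ω` (the subword property). Both
directions rest on the strong exchange property, which we derive from the reflection cocycle: the
homomorphism `W → (W → ℤˣ) ⋊ W` sending `sᵢ` to (sign `-1` exactly at `sᵢ`, `sᵢ`).
-/

open scoped Classical

noncomputable abbrev conjArrow : W →* MulAut (W → ℤˣ) :=
  mulAutArrow.comp (ConjAct.toConjAct : W ≃* ConjAct W).toMonoidHom

theorem conjArrow_apply (w : W) (f : W → ℤˣ) (t : W) : conjArrow w f t = f (w⁻¹ * t * w) := by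
  change f ((ConjAct.toConjAct w)⁻¹ • t) = _
  rw [ConjAct.smul_def]
  simp

theorem conjArrow_mulSingle (w a : W) (c : ℤˣ) :
    conjArrow w (Pi.mulSingle a c) = Pi.mulSingle (w * a * w⁻¹) c := by
  funext t
  have : w⁻¹ * t * w = a ↔ t = w * a * w⁻¹ := by
    constructor <;> rintro rfl <;> group
  simp only [conjArrow_apply, Pi.mulSingle_apply, this]

theorem SemidirectProduct.right_pow {N G : Type*} [Group N] [Group G] {φ : G →* MulAut N}
    (x : N ⋊[φ] G) (n : ℕ) : (x ^ n).right = x.right ^ n :=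
  map_pow SemidirectProduct.rightHom x n

namespace CoxeterSystem

variable (cs : CoxeterSystem M W)

local prefix:100 "s" => cs.simple
local prefix:100 "π" => cs.wordProd
local prefix:100 "ℓ" => cs.length

noncomputable def cocycleGen (i : B) : (W → ℤˣ) ⋊[conjArrow] W := ⟨Pi.mulSingle (s i) (-1), s i⟩

theorem simple_mul_inv_pow_simple_mul_simple (i j : B) (n : ℕ) :
    s i * ((s i * s j) ^ n)⁻¹ = (s i * s j) ^ n * s i := by
  have h : s i * (s i * s j)⁻¹ * (s i)⁻¹ = s i * s j := by
    simp only [mul_inv_rev, inv_simple, mul_assoc, simple_mul_simple_self, mul_one]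
  calc s i * ((s i * s j) ^ n)⁻¹ = (s i * (s i * s j)⁻¹ * (s i)⁻¹) ^ n * s i := by
        rw [conj_pow, inv_pow]; group
    _ = (s i * s j) ^ n * s i := by rw [h]

theorem conj_pow_simple_mul_simple (i j : B) (n a : ℕ) :
    (s i * s j) ^ n * ((s i * s j) ^ a * s i) * ((s i * s j) ^ n)⁻¹ =
      (s i * s j) ^ (2 * n + a) * s i := by
  rw [mul_assoc, mul_assoc, simple_mul_inv_pow_simple_mul_simple, ← mul_assoc, ← mul_assoc,
    ← pow_add, ← pow_add]
  congr 2
  omega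

-- Exponents `0` and `1` so that `conj_pow_simple_mul_simple` rewrites both factors.
theorem left_cocycleGen_mul (i j : B) :
    (cocycleGen cs i * cocycleGen cs j).left =
      Pi.mulSingle ((s i * s j) ^ 0 * s i) (-1) * Pi.mulSingle ((s i * s j) ^ 1 * s i) (-1) := by
  rw [SemidirectProduct.mul_left]
  simp only [cocycleGen, conjArrow_mulSingle, pow_zero, one_mul, pow_one, inv_simple]

theorem left_cocycleGen_mul_pow (i j : B) (n : ℕ) :
    ((cocycleGen cs i * cocycleGen cs j) ^ n).left =
      ∏ k ∈ Finset.range (2 * n), Pi.mulSingle ((s i * s j) ^ k * s i) (-1) := by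
  induction n with
  | zero => rfl
  | succ n ih =>
    rw [pow_succ, SemidirectProduct.mul_left, ih, SemidirectProduct.right_pow,
      left_cocycleGen_mul, SemidirectProduct.mul_right, map_mul]
    simp only [cocycleGen, conjArrow_mulSingle, conj_pow_simple_mul_simple]
    rw [mul_add_one, Finset.prod_range_succ, Finset.prod_range_succ, mul_assoc, add_zero]

theorem isLiftable_cocycleGen : M.IsLiftable (cocycleGen cs) := by
  intro i j
  have hm : (s i * s j) ^ M i j = 1 := cs.simple_mul_simple_pow i j
  ext1
  · -- As `(sᵢsⱼ)ᵐ = 1`, the reflections `(sᵢsⱼ)ᵏsᵢ` for `k < 2m` are those for `k < m`, twice.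
    rw [left_cocycleGen_mul_pow, two_mul, Finset.prod_range_add]
    simp only [pow_add, hm, one_mul]
    funext t
    exact Int.units_mul_self _
  · rw [SemidirectProduct.right_pow]
    exact hm

noncomputable def reflCocycle : W →* (W → ℤˣ) ⋊[conjArrow] W :=
  cs.lift ⟨cocycleGen cs, isLiftable_cocycleGen cs⟩

theorem right_reflCocycle (w : W) : (cs.reflCocycle w).right = w := by
  have : SemidirectProduct.rightHom.comp cs.reflCocycle = MonoidHom.id W :=
    cs.ext_simple fun i => by simp [reflCocycle, cocycleGen]
  exact DFunLike.congr_fun this w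

/-- For a word `ω`, `leftInvSign (π ω) t` is `(-1)` to the number of occurrences of `t` in
`leftInvSeq ω`; that this depends only on `π ω` is what the braid relations checked in
`isLiftable_cocycleGen` provide. -/
noncomputable def leftInvSign (w t : W) : ℤˣ := (cs.reflCocycle w).left t

theorem leftInvSign_mul (a b t : W) :
    cs.leftInvSign (a * b) t = cs.leftInvSign a t * cs.leftInvSign b (a⁻¹ * t * a) := by
  simp only [leftInvSign, map_mul, SemidirectProduct.mul_left, Pi.mul_apply, conjArrow_apply,
    right_reflCocycle]

theorem leftInvSign_one (t : W) : cs.leftInvSign 1 t = 1 := by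
  simp [leftInvSign]

theorem leftInvSign_simple (i : B) (t : W) :
    cs.leftInvSign (s i) t = if t = s i then -1 else 1 := by
  simp [leftInvSign, reflCocycle, cocycleGen, Pi.mulSingle_apply]

theorem mem_leftInvSeq_of_leftInvSign_eq_neg_one {ω : List B} {t : W}
    (h : cs.leftInvSign (π ω) t = -1) : t ∈ cs.leftInvSeq ω := by
  induction ω generalizing t with
  | nil => simp [leftInvSign_one] at h
  | cons i ω ih =>
    rw [wordProd_cons, leftInvSign_mul, leftInvSign_simple, inv_simple] at h
    rw [leftInvSeq, List.mem_cons, List.mem_map]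
    by_cases ht : t = s i
    · exact Or.inl ht
    · rw [if_neg ht, one_mul] at h
      refine Or.inr ⟨_, ih h, ?_⟩
      simp [MulAut.conj_apply, mul_assoc, simple_mul_simple_self]

theorem leftInvSign_self {t : W} (ht : cs.IsReflection t) : cs.leftInvSign t t = -1 := by
  obtain ⟨u, i, rfl⟩ := ht
  have hconj : u⁻¹ * (u * s i * u⁻¹) * u = s i := by group
  have hinv : cs.leftInvSign u⁻¹ (s i) = (cs.leftInvSign u (u * s i * u⁻¹))⁻¹ := by
    have h := cs.leftInvSign_mul u u⁻¹ (u * s i * u⁻¹)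
    rw [mul_inv_cancel, leftInvSign_one, hconj] at h
    exact eq_inv_of_mul_eq_one_right h.symm
  rw [show cs.leftInvSign (u * s i * u⁻¹) = cs.leftInvSign (u * (s i * u⁻¹)) by
    rw [mul_assoc], leftInvSign_mul, hconj, leftInvSign_mul, leftInvSign_simple, if_pos rfl,
    inv_simple, simple_mul_simple_self, one_mul, hinv, mul_left_comm,
    mul_inv_cancel, mul_one]

theorem leftInvSign_eq_neg_one_iff {w t : W} (ht : cs.IsReflection t) :
    cs.leftInvSign w t = -1 ↔ cs.IsLeftInversion w t := by
  have of_sign : ∀ v : W, cs.leftInvSign v t = -1 → cs.IsLeftInversion v t := by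
    intro v hv
    obtain ⟨ω, hω, rfl⟩ := cs.exists_isReduced v
    exact cs.isLeftInversion_of_mem_leftInvSeq hω (cs.mem_leftInvSeq_of_leftInvSign_eq_neg_one hv)
  refine ⟨of_sign w, fun ⟨_, hlt⟩ => ?_⟩
  rcases Int.units_eq_one_or (cs.leftInvSign w t) with h | h
  · have hsign : cs.leftInvSign (t * w) t = -1 := by
      rw [leftInvSign_mul, leftInvSign_self cs ht, ht.inv, ht.mul_self, one_mul, h, mul_one]
    have := (of_sign _ hsign).2
    rw [← mul_assoc, ht.mul_self, one_mul] at this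
    omega
  · exact h

/-- The strong exchange property, for arbitrary words. -/
theorem exists_eraseIdx_of_isLeftInversion {ω : List B} {t : W}
    (h : cs.IsLeftInversion (π ω) t) : ∃ k < ω.length, t * π ω = π (ω.eraseIdx k) := by
  have hmem := cs.mem_leftInvSeq_of_leftInvSign_eq_neg_one ((cs.leftInvSign_eq_neg_one_iff h.1).2 h)
  obtain ⟨k, hk, rfl⟩ := List.mem_iff_getElem.mp hmem
  rw [length_leftInvSeq] at hk
  exact ⟨k, hk, by rw [← List.getD_eq_getElem _ 1, getD_leftInvSeq_mul_wordProd]⟩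

theorem isReduced_cons_iff {i : B} {ω : List B} :
    cs.IsReduced (i :: ω) ↔ cs.IsReduced ω ∧ ¬cs.IsLeftDescent (π ω) i := by
  have hle := cs.length_wordProd_le ω
  rw [not_isLeftDescent_iff, IsReduced, IsReduced, wordProd_cons, List.length_cons]
  rcases cs.length_simple_mul (π ω) i with h | h <;> omega

noncomputable def subwordProds (ω : List B) : Finset W := (ω.sublists.map cs.wordProd).toFinset

variable {cs}

theorem mem_subwordProds {ω : List B} {u : W} :
    u ∈ cs.subwordProds ω ↔ ∃ ω' : List B, ω'.Sublist ω ∧ π ω' = u := by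
  simp [subwordProds, List.mem_sublists]

theorem wordProd_mem_subwordProds (ω : List B) : π ω ∈ cs.subwordProds ω :=
  mem_subwordProds.2 ⟨ω, List.Sublist.refl ω, rfl⟩

theorem mul_mem_subwordProds {ω : List B} {u t : W} (hu : u ∈ cs.subwordProds ω)
    (ht : cs.IsLeftInversion u t) : t * u ∈ cs.subwordProds ω := by
  obtain ⟨ω', hsub, rfl⟩ := mem_subwordProds.1 hu
  obtain ⟨k, -, hk⟩ := cs.exists_eraseIdx_of_isLeftInversion ht
  exact mem_subwordProds.2 ⟨_, (ω'.eraseIdx_sublist k).trans hsub, hk.symm⟩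

theorem subwordProds_cons (i : B) (ω : List B) :
    cs.subwordProds (i :: ω) =
      cs.subwordProds ω ∪ (cs.subwordProds ω).image (s i * ·) := by
  ext u
  simp only [Finset.mem_union, Finset.mem_image, mem_subwordProds, List.sublist_cons_iff]
  constructor
  · rintro ⟨ω', hω' | ⟨τ, rfl, hτ⟩, rfl⟩
    · exact Or.inl ⟨ω', hω', rfl⟩
    · exact Or.inr ⟨_, ⟨τ, hτ, rfl⟩, (wordProd_cons ..).symm⟩
  · rintro (⟨ω', hω', rfl⟩ | ⟨_, ⟨τ, hτ, rfl⟩, rfl⟩)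
    · exact ⟨ω', Or.inl hω', rfl⟩
    · exact ⟨i :: τ, Or.inr ⟨τ, rfl, hτ⟩, wordProd_cons ..⟩

variable (cs) in
/-- The Demazure product `sᵢ ⋆ w`. -/
noncomputable def demazureMul (i : B) (w : W) : W :=
  if cs.IsLeftDescent w i then w else s i * w

theorem demazureMul_of_isLeftDescent {i : B} {w : W} (h : cs.IsLeftDescent w i) :
    cs.demazureMul i w = w :=
  if_pos h

theorem demazureMul_of_not_isLeftDescent {i : B} {w : W} (h : ¬cs.IsLeftDescent w i) :
    cs.demazureMul i w = s i * w :=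
  if_neg h

theorem union_image_simple_mul_eq {i : B} {D : Finset W}
    (hD : ∀ u ∈ D, cs.IsLeftDescent u i → s i * u ∈ D) :
    D ∪ D.image (s i * ·) =
      D.filter (¬cs.IsLeftDescent · i) ∪ (D.filter (¬cs.IsLeftDescent · i)).image (s i * ·) := by
  ext u
  simp only [Finset.mem_union, Finset.mem_image, Finset.mem_filter]
  constructor
  · rintro (hu | ⟨x, hx, rfl⟩)
    · by_cases h : cs.IsLeftDescent u i
      · refine Or.inr ⟨s i * u, ⟨hD u hu h, ?_⟩, cs.simple_mul_simple_cancel_left i⟩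
        exact cs.isLeftDescent_iff_not_isLeftDescent_mul.1 h
      · exact Or.inl ⟨hu, h⟩
    · by_cases h : cs.IsLeftDescent x i
      · exact Or.inl ⟨hD x hx h, cs.isLeftDescent_iff_not_isLeftDescent_mul.1 h⟩
      · exact Or.inr ⟨x, ⟨hx, h⟩, rfl⟩
  · rintro (⟨hu, -⟩ | ⟨x, ⟨hx, -⟩, rfl⟩)
    · exact Or.inl hu
    · exact Or.inr ⟨x, hx, rfl⟩

/-- The terms of the descents of `sᵢ` vanish; every other `u` pairs with `sᵢ u`, whose sign is
opposite. -/
theorem sum_sub_demazureMul {E : Type*} [AddCommGroup E] (i : B) {D : Finset W}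
    (hD : ∀ u ∈ D, cs.IsLeftDescent u i → s i * u ∈ D) (f : W → E) :
    ∑ u ∈ D, (-1 : ℤ) ^ ℓ u • (f u - f (cs.demazureMul i u)) =
      ∑ u ∈ D ∪ D.image (s i * ·), (-1 : ℤ) ^ ℓ u • f u := by
  set A := D.filter (¬cs.IsLeftDescent · i)
  have hdisj : Disjoint A (A.image (s i * ·)) := by
    refine Finset.disjoint_left.2 fun u hu hu' => ?_
    obtain ⟨x, hx, rfl⟩ := Finset.mem_image.1 hu'
    exact (Finset.mem_filter.1 hu).2
      (cs.isLeftDescent_iff_not_isLeftDescent_mul.2 (by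
        rw [cs.simple_mul_simple_cancel_left]; exact (Finset.mem_filter.1 hx).2))
  have hdesc : ∑ u ∈ D.filter (cs.IsLeftDescent · i),
      (-1 : ℤ) ^ ℓ u • (f u - f (cs.demazureMul i u)) = 0 :=
    Finset.sum_eq_zero fun u hu => by
      rw [demazureMul_of_isLeftDescent (Finset.mem_filter.1 hu).2, sub_self, smul_zero]
  rw [union_image_simple_mul_eq hD, Finset.sum_union hdisj,
    Finset.sum_image fun _ _ _ _ h => mul_left_cancel h, ← Finset.sum_add_distrib,
    ← Finset.sum_filter_not_add_sum_filter D (cs.IsLeftDescent · i), hdesc, add_zero]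
  refine Finset.sum_congr rfl fun u hu => ?_
  have hu := (Finset.mem_filter.1 hu).2
  rw [demazureMul_of_not_isLeftDescent hu, cs.not_isLeftDescent_iff.1 hu, pow_succ, mul_neg_one,
    neg_smul, smul_sub, sub_eq_add_neg]

variable (cs) in
def BruhatStep (x y : W) : Prop := ∃ t, cs.IsLeftInversion y t ∧ x = t * y

variable (cs) in
/-- The Bruhat order in its definition by reflections. -/
def BruhatChainLE : W → W → Prop := Relation.ReflTransGen cs.BruhatStep

theorem bruhatStep_simple_mul {w : W} {i : B} (h : cs.IsLeftDescent w i) :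
    cs.BruhatStep (s i * w) w :=
  ⟨s i, (cs.isLeftInversion_simple_iff_isLeftDescent w i).2 h, rfl⟩

theorem bruhatStep_of_not_isLeftDescent {w : W} {i : B} (h : ¬cs.IsLeftDescent w i) :
    cs.BruhatStep w (s i * w) := by
  have := bruhatStep_simple_mul (cs.isLeftDescent_iff_not_isLeftDescent_mul.2 (by
    rwa [cs.simple_mul_simple_cancel_left]))
  rwa [cs.simple_mul_simple_cancel_left] at this

theorem mem_subwordProds_of_bruhatChainLE {ω : List B} {u : W} (h : cs.BruhatChainLE u (π ω)) :
    u ∈ cs.subwordProds ω := by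
  induction h using Relation.ReflTransGen.head_induction_on with
  | refl => exact wordProd_mem_subwordProds ω
  | head hstep _ ih =>
    obtain ⟨t, ht, rfl⟩ := hstep
    exact mul_mem_subwordProds ih ht

theorem simple_mul_eq_of_isLeftInversion {y t : W} {i : B} (ht : cs.IsLeftInversion y t)
    (hlen : ℓ y = ℓ (t * y) + 1) (hy : cs.IsLeftDescent y i) (hx : ¬cs.IsLeftDescent (t * y) i) :
    s i * (t * y) = y := by
  obtain ⟨σ, hσ, hσy⟩ := cs.exists_isReduced (s i * y)
  have hy' : π (i :: σ) = y := by rw [wordProd_cons, ← hσy, simple_mul_simple_cancel_left]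
  have hlenσ : ℓ (s i * y) = σ.length := hσy ▸ hσ
  rw [← hy'] at ht
  obtain ⟨k, hk, hexch⟩ := cs.exists_eraseIdx_of_isLeftInversion ht
  rw [hy'] at hexch
  rcases k with _ | j
  · rw [hexch, List.eraseIdx_cons_zero, ← hσy, simple_mul_simple_cancel_left]
  · exfalso
    rw [List.eraseIdx_cons_succ, wordProd_cons] at hexch
    have hle := cs.length_wordProd_le (σ.eraseIdx j)
    rw [List.length_eraseIdx_of_lt (by simpa using hk)] at hle
    have hsub : π (σ.eraseIdx j) = s i * (t * y) := by rw [hexch, simple_mul_simple_cancel_left]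
    rw [hsub, cs.not_isLeftDescent_iff.1 hx] at hle
    rw [cs.isLeftDescent_iff] at hy
    omega

theorem bruhatStep_simple_mul_of_bruhatStep {x y : W} {i : B} (h : cs.BruhatStep x y)
    (hlen : ℓ (s i * x) < ℓ (s i * y)) : cs.BruhatStep (s i * x) (s i * y) := by
  obtain ⟨t, ht, rfl⟩ := h
  exact ⟨s i * t * (s i)⁻¹, ⟨ht.1.conj (s i), by group at hlen ⊢; exact hlen⟩, by group⟩

theorem demazureMul_bruhatChainLE_of_bruhatStep (i : B) {x y : W} (h : cs.BruhatStep x y) :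
    cs.BruhatChainLE (cs.demazureMul i x) (cs.demazureMul i y) := by
  obtain ⟨t, ht, rfl⟩ := id h
  have hty := ht.2
  by_cases hy : cs.IsLeftDescent y i <;> by_cases hx : cs.IsLeftDescent (t * y) i <;>
    simp only [demazureMul_of_isLeftDescent, demazureMul_of_not_isLeftDescent, hx, hy,
      not_false_eq_true]
  · exact .single h
  · have hy' := cs.isLeftDescent_iff.1 hy
    have hx' := cs.not_isLeftDescent_iff.1 hx
    rcases lt_trichotomy (ℓ (s i * (t * y))) (ℓ (s i * y)) with hlt | heq | hgt
    · exact .head (bruhatStep_simple_mul_of_bruhatStep h hlt) (.single (bruhatStep_simple_mul hy))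
    · have hne := (ht.1.conj (s i)).length_mul_right_ne (s i * y)
      rw [show s i * t * (s i)⁻¹ * (s i * y) = s i * (t * y) by group] at hne
      exact absurd heq hne
    · rw [simple_mul_eq_of_isLeftInversion ht (by omega) hy hx]
      exact .refl
  · exact .head h (.single (bruhatStep_of_not_isLeftDescent hy))
  · refine .single (bruhatStep_simple_mul_of_bruhatStep h ?_)
    rw [cs.not_isLeftDescent_iff.1 hx, cs.not_isLeftDescent_iff.1 hy]
    omega

theorem demazureMul_bruhatChainLE (i : B) {x y : W} (h : cs.BruhatChainLE x y) :
    cs.BruhatChainLE (cs.demazureMul i x) (cs.demazureMul i y) := by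
  induction h with
  | refl => exact .refl
  | tail _ hstep ih => exact ih.trans (demazureMul_bruhatChainLE_of_bruhatStep i hstep)

theorem bruhatChainLE_of_mem_subwordProds {ω : List B} (hω : cs.IsReduced ω) {u : W}
    (hu : u ∈ cs.subwordProds ω) : cs.BruhatChainLE u (π ω) := by
  induction ω generalizing u with
  | nil =>
    obtain ⟨ω', hω', rfl⟩ := mem_subwordProds.1 hu
    rw [List.sublist_nil.1 hω']
    exact .refl
  | cons i ω ih =>
    obtain ⟨hω, hi⟩ := cs.isReduced_cons_iff.1 hω
    have hstep := bruhatStep_of_not_isLeftDescent hi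
    rw [wordProd_cons]
    rw [subwordProds_cons, Finset.mem_union, Finset.mem_image] at hu
    rcases hu with hu | ⟨x, hx, rfl⟩
    · exact (ih hω hu).tail hstep
    · have hmono := demazureMul_bruhatChainLE i (ih hω hx)
      rw [demazureMul_of_not_isLeftDescent hi] at hmono
      by_cases hxi : cs.IsLeftDescent x i
      · rw [demazureMul_of_isLeftDescent hxi] at hmono
        exact .head (bruhatStep_simple_mul hxi) hmono
      · rwa [demazureMul_of_not_isLeftDescent hxi] at hmono

theorem subwordProds_subset_of_wordProd_eq {ρ ω : List B} (hρ : cs.IsReduced ρ)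
    (h : π ρ = π ω) : cs.subwordProds ρ ⊆ cs.subwordProds ω := fun _ hu =>
  mem_subwordProds_of_bruhatChainLE (h ▸ bruhatChainLE_of_mem_subwordProds hρ hu)

/-- The subword property. -/
theorem bruhatLE_wordProd_iff {ω : List B} (hω : cs.IsReduced ω) {u : W} :
    cs.bruhatLE u (π ω) ↔ u ∈ cs.subwordProds ω :=
  ⟨fun ⟨_, hρ, hρω, ρ', hsub, hu⟩ =>
    subwordProds_subset_of_wordProd_eq hρ hρω (mem_subwordProds.2 ⟨ρ', hsub, hu⟩),
   fun hu => ⟨ω, hω, rfl, mem_subwordProds.1 hu⟩⟩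

theorem projSimple_projSimple (i : B) (w : W) :
    cs.projSimple i (cs.projSimple i w) = cs.projSimple i w := by
  by_cases h : ℓ (w * s i) < ℓ w
  · have : ¬ℓ (w * s i * s i) < ℓ (w * s i) := by
      rw [simple_mul_simple_cancel_right]; omega
    simp only [projSimple, if_pos h, if_neg this]
  · simp only [projSimple, if_neg h]

theorem isIdempotentElem_projS (i : B) : IsIdempotentElem (cs.projS i) := by
  rw [IsIdempotentElem, projS, Module.End.mul_eq_comp, ← Finsupp.lmapDomain_comp]
  congr 1
  exact funext (projSimple_projSimple i)

theorem lmapDomain_projWord_cons (i : B) (ω : List B) :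
    Finsupp.lmapDomain ℤ ℤ (cs.projWord (i :: ω)) =
      cs.projS i * Finsupp.lmapDomain ℤ ℤ (cs.projWord ω) :=
  Finsupp.lmapDomain_comp ℤ ℤ (cs.projWord ω) (cs.projSimple i)

theorem subwordProds_nil : cs.subwordProds [] = {1} := by
  simp [subwordProds]

theorem projBar_demazureMul {PbarU : W → Module.End ℤ (W →₀ ℤ)}
    (hPbarU : ∀ (u : W) (ω : List B), cs.IsReduced ω → cs.wordProd ω = u →
      PbarU u = cs.projBarWord ω) (i : B) (u : W) :
    PbarU (cs.demazureMul i u) = (1 - cs.projS i) * PbarU u := by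
  by_cases hu : cs.IsLeftDescent u i
  · obtain ⟨σ, hσ, hσu⟩ := cs.exists_isReduced (s i * u)
    have hred : cs.IsReduced (i :: σ) := cs.isReduced_cons_iff.2
      ⟨hσ, by rwa [← hσu, ← cs.isLeftDescent_iff_not_isLeftDescent_mul]⟩
    have hu' : π (i :: σ) = u := by rw [wordProd_cons, ← hσu, simple_mul_simple_cancel_left]
    rw [demazureMul_of_isLeftDescent hu, hPbarU u _ hred hu', projBarWord, List.foldr_cons,
      ← mul_assoc, (isIdempotentElem_projS i).one_sub.eq]
  · obtain ⟨ω, hω, rfl⟩ := cs.exists_isReduced u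
    rw [demazureMul_of_not_isLeftDescent hu,
      hPbarU _ (i :: ω) (cs.isReduced_cons_iff.2 ⟨hω, hu⟩) (wordProd_cons ..), hPbarU _ ω hω rfl]
    rfl

theorem lmapDomain_projWord_eq_sum {PbarU : W → Module.End ℤ (W →₀ ℤ)}
    (hPbarU : ∀ (u : W) (ω : List B), cs.IsReduced ω → cs.wordProd ω = u →
      PbarU u = cs.projBarWord ω) (ω : List B) :
    Finsupp.lmapDomain ℤ ℤ (cs.projWord ω) =
      ∑ u ∈ cs.subwordProds ω, (-1 : ℤ) ^ ℓ u • PbarU u := by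
  induction ω with
  | nil =>
    rw [subwordProds_nil, Finset.sum_singleton, length_one, pow_zero, one_smul,
      hPbarU 1 [] (by simp [IsReduced]) rfl]
    exact Finsupp.lmapDomain_id _ _
  | cons i ω ih =>
    have hdesc (u : W) (hu : u ∈ cs.subwordProds ω) (h : cs.IsLeftDescent u i) :
        s i * u ∈ cs.subwordProds ω :=
      mul_mem_subwordProds hu ((cs.isLeftInversion_simple_iff_isLeftDescent u i).2 h)
    rw [lmapDomain_projWord_cons, ih, subwordProds_cons, ← sum_sub_demazureMul i hdesc,
      Finset.mul_sum]
    refine Finset.sum_congr rfl fun u _ => ?_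
    rw [projBar_demazureMul hPbarU, sub_mul, one_mul, sub_sub_cancel, mul_smul_comm]

end CoxeterSystem

theorem stmt_16 (cs : CoxeterSystem M W) (v : W)
    (PU PbarU : W → Module.End ℤ (W →₀ ℤ))
    (hPU : ∀ (u : W) (ω : List B), cs.IsReduced ω → cs.wordProd ω = u →
      PU u = Finsupp.lmapDomain ℤ ℤ (cs.projWord ω))
    (hPbarU : ∀ (u : W) (ω : List B), cs.IsReduced ω → cs.wordProd ω = u →
      PbarU u = cs.projBarWord ω)
    (F : Finset W) (hF : ∀ u : W, u ∈ F ↔ cs.bruhatLE u v) :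
    PU v = ∑ u ∈ F, ((-1 : ℤ) ^ cs.length u) • PbarU u := by
  obtain ⟨ω, hω, rfl⟩ := cs.exists_isReduced v
  have hFω : F = cs.subwordProds ω :=
    Finset.ext fun u => (hF u).trans (bruhatLE_wordProd_iff hω)
  rw [hPU _ ω hω rfl, hFω, lmapDomain_projWord_eq_sum hPbarU ω]
end

section
/- Let (R, S) be a right-angled Coxeter system (all off-diagonal Coxeter matrix entries are 2 or ∞), and let R^A be the associated right-angled Artin group on generators S with relations st = ts whenever m(s,t) = 2. Then the group homomorphism φ : R^A → H(R)* determined by φ(s) = T_s, where H(R) is the Hecke algebra of (R,S) over ℤ[q,q⁻¹] and H(R)* its group of units, is injective. -/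
open CoxeterSystem LaurentPolynomial

/-- The Laurent polynomial ring `ℤ[q,q⁻¹]`. -/
noncomputable abbrev LaurentZ : Type := LaurentPolynomial ℤ

/-- The variable `q` of `ℤ[q,q⁻¹]`. -/
noncomputable def qL : LaurentZ := T 1

variable {B : Type*}

/-- The relations of the right-angled Artin group associated to a Coxeter matrix:
the generators `s, t` commute whenever `m(s,t) = 2`. -/
def artinRels (M : CoxeterMatrix B) : Set (FreeGroup B) :=
  {r | ∃ s t : B, M s t = 2 ∧
    r = FreeGroup.of s * FreeGroup.of t * (FreeGroup.of s)⁻¹ * (FreeGroup.of t)⁻¹}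

/-- The right-angled Artin group of a Coxeter matrix. -/
def ArtinGroup (M : CoxeterMatrix B) : Type _ := PresentedGroup (artinRels M)

instance (M : CoxeterMatrix B) : Group (ArtinGroup M) :=
  inferInstanceAs (Group (PresentedGroup (artinRels M)))


/-!
Write `g ∈ R^A` as a product of syllables `s₁ ^ e₁ ⋯ sₖ ^ eₖ` with all `eᵢ ≠ 0`. In `H(R)`,
`T_s ^ e = a + c T_s` with `c ≠ 0` whenever `e ≠ 0`, because `T_s = -1 + (q + 1) P` for an
idempotent `P`. Hence, if `s₁ ⋯ sₖ` is a reduced word, the image of `g` has no component on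
`T_w` with `ℓ(w) > k` and a nonzero one on `T_{s₁ ⋯ sₖ}`, so it is not `1` unless `k = 0`.
If the word is not reduced, the right-angled deletion condition finds two letters `t` separated
only by letters commuting with `t`; the two syllables then merge, and we induct on `k`.

The deletion condition comes from the geometric representation `ρ` on `⊕ ℤ αᵢ`: for a right-angled
system `ρ(w) α_t` is `≥ 0` or `< 0` according as `t` is an ascent or a descent of `w`, and a
letter `c` with `m(c, t) = ∞` cannot follow the last `t` of a reduced word with descent `t`,
since it would push `α_t` into the positive cone spanned by `α_t` and `α_c`.
-/

open Finsupp (single)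

theorem Module.commute_reflection {R V : Type*} [CommRing R] [AddCommGroup V] [Module R V]
    {x y : V} {f g : Module.Dual R V} (hf : f x = 2) (hg : g y = 2) (hfy : f y = 0)
    (hgx : g x = 0) : Commute (Module.reflection hf) (Module.reflection hg) := by
  rw [commute_iff_eq]
  ext z
  simp only [LinearEquiv.mul_apply, Module.reflection_apply, map_sub, map_smul, hfy, hgx,
    zero_smul, sub_zero]
  abel

def CoxeterMatrix.IsRightAngled (M : CoxeterMatrix B) : Prop :=
  ∀ s t : B, s ≠ t → M s t = 2 ∨ M s t = 0

namespace CoxeterMatrix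

variable [DecidableEq B] (M : CoxeterMatrix B)

/-- Twice the Tits form `⟨αᵢ, αⱼ⟩ = -cos (π / M i j)`, correct (and integral) when `M` is
right-angled; the simple root `αⱼ` is `single j 1`. -/
noncomputable def raForm (i : B) : Module.Dual ℤ (B →₀ ℤ) :=
  Finsupp.linearCombination ℤ fun j => if i = j then 2 else if M i j = 0 then -2 else 0

theorem raForm_single (i j : B) :
    M.raForm i (single j 1) = if i = j then 2 else if M i j = 0 then -2 else 0 := by
  simp [raForm]

noncomputable def raReflection (i : B) : (B →₀ ℤ) ≃ₗ[ℤ] (B →₀ ℤ) :=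
  Module.reflection (M.raForm_single i i |>.trans (if_pos rfl))

theorem raReflection_single (i j : B) :
    M.raReflection i (single j 1) = single j 1 - M.raForm i (single j 1) • single i 1 :=
  Module.reflection_apply _ _

theorem raReflection_single_self (i : B) : M.raReflection i (single i 1) = -single i 1 :=
  Module.reflection_apply_self _

theorem raReflection_single_of_eq_two {i j : B} (h : M i j = 2) :
    M.raReflection i (single j 1) = single j 1 := by
  have hij : i ≠ j := by rintro rfl; simp at h
  simp [raReflection_single, raForm_single, hij, h]

theorem raReflection_single_of_eq_zero {i j : B} (h : M i j = 0) :
    M.raReflection i (single j 1) = single j 1 + (2 : ℤ) • single i 1 := by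
  have hij : i ≠ j := by rintro rfl; simp at h
  rw [raReflection_single, raForm_single, if_neg hij, if_pos h]
  module

theorem raReflection_mul_self (i : B) : M.raReflection i * M.raReflection i = 1 :=
  mul_eq_one_iff_eq_inv.mpr (Module.reflection_inv _).symm

theorem isLiftable_raReflection (hM : M.IsRightAngled) : M.IsLiftable M.raReflection := by
  intro i j
  rcases eq_or_ne i j with rfl | hij
  · rw [M.diagonal, pow_one, raReflection_mul_self]
  rcases hM i j hij with h | h
  · have hji : M j i = 2 := M.symmetric i j ▸ h
    have hc : Commute (M.raReflection i) (M.raReflection j) :=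
      Module.commute_reflection _ _ (by simp [raForm_single, hij, h])
        (by simp [raForm_single, hij.symm, hji])
    rw [h, hc.mul_pow, sq, sq, raReflection_mul_self, raReflection_mul_self, one_mul]
  · rw [h, pow_zero]

end CoxeterMatrix

namespace CoxeterSystem

variable {R : Type*} [Group R] {M : CoxeterMatrix B} (cs : CoxeterSystem M R)

theorem commute_simple_of_eq_two {i j : B} (h : M i j = 2) :
    Commute (cs.simple i) (cs.simple j) := by
  have h1 := cs.simple_mul_simple_pow i j
  rw [h, sq, ← eq_inv_iff_mul_eq_one, mul_inv_rev, cs.inv_simple, cs.inv_simple] at h1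
  exact h1

theorem isRightDescent_mul_simple_of_commute {w : R} {i j : B}
    (hij : Commute (cs.simple i) (cs.simple j)) (hwi : ¬cs.IsRightDescent w i)
    (hwj : cs.IsRightDescent w j) : cs.IsRightDescent (w * cs.simple i) j := by
  have h1 := cs.length_mul_le (w * cs.simple j) (cs.simple i)
  rw [cs.length_simple, mul_assoc, ← hij.eq, ← mul_assoc] at h1
  have h2 := cs.isRightDescent_iff.mp hwj
  have h3 := cs.not_isRightDescent_iff.mp hwi
  unfold IsRightDescent
  omega

section GeomRep

variable [DecidableEq B] (hM : M.IsRightAngled)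

noncomputable def raGeomRep : R →* (B →₀ ℤ) ≃ₗ[ℤ] (B →₀ ℤ) :=
  cs.lift ⟨M.raReflection, M.isLiftable_raReflection hM⟩

theorem raGeomRep_mul_simple_apply (w : R) (i : B) (x : B →₀ ℤ) :
    cs.raGeomRep hM (w * cs.simple i) x = cs.raGeomRep hM w (M.raReflection i x) := by
  rw [map_mul, LinearEquiv.mul_apply, raGeomRep, cs.lift_apply_simple]

theorem raGeomRep_smul_add_smul_nonneg_of_le {n : ℕ}
    (hpos : ∀ v, cs.length v ≤ n → ∀ t, ¬cs.IsRightDescent v t →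
      0 ≤ cs.raGeomRep hM v (single t 1))
    {d : R} (hd : cs.length d ≤ n) {t c : B} (htc : M t c = 0) {a b : ℤ} (hb : 0 ≤ b)
    (hba : b < a) (hdt : ¬cs.IsRightDescent d t) :
    0 ≤ cs.raGeomRep hM d (a • single t 1 + b • single c 1) := by
  by_cases hdc : cs.IsRightDescent d c
  · -- peeling `c` off `d` keeps the vector in the same cone, with `t` and `c` swapped
    have hlen := cs.isRightDescent_iff.mp hdc
    have hct : M c t = 0 := M.symmetric t c ▸ htc
    have hvec : M.raReflection c (a • single t 1 + b • single c 1)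
        = (2 * a - b) • single c 1 + a • single t 1 := by
      rw [map_add, map_smul, map_smul, M.raReflection_single_of_eq_zero hct,
        M.raReflection_single_self]
      module
    rw [← cs.simple_mul_simple_cancel_right (w := d) c, raGeomRep_mul_simple_apply, hvec]
    exact raGeomRep_smul_add_smul_nonneg_of_le hpos (by omega) hct (by omega) (by omega)
      (by rwa [isRightDescent_iff_not_isRightDescent_mul] at hdc)
  · have := hpos d hd t hdt
    have := hpos d hd c hdc
    have : 0 ≤ a := by omega
    rw [map_add, map_smul, map_smul]
    positivity
termination_by cs.length d
decreasing_by omega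

theorem raGeomRep_single_nonneg (w : R) {t : B} (hwt : ¬cs.IsRightDescent w t) :
    0 ≤ cs.raGeomRep hM w (single t 1) := by
  rcases eq_or_ne w 1 with rfl | hw
  · simp
  obtain ⟨c, hwc⟩ := cs.exists_rightDescent_of_ne_one hw
  have hlen := cs.isRightDescent_iff.mp hwc
  have hw'c : ¬cs.IsRightDescent (w * cs.simple c) c := by
    rwa [isRightDescent_iff_not_isRightDescent_mul] at hwc
  have hct : c ≠ t := by rintro rfl; exact hwt hwc
  rw [← cs.simple_mul_simple_cancel_right (w := w) c, raGeomRep_mul_simple_apply]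
  rcases hM c t hct with h | h
  · rw [M.raReflection_single_of_eq_two h]
    refine raGeomRep_single_nonneg (w * cs.simple c) fun hw't => hwt ?_
    simpa using cs.isRightDescent_mul_simple_of_commute (cs.commute_simple_of_eq_two h) hw'c hw't
  · rw [M.raReflection_single_of_eq_zero h, add_comm, ← one_smul ℤ (single t 1)]
    exact cs.raGeomRep_smul_add_smul_nonneg_of_le hM
      (fun v hv s hvs => raGeomRep_single_nonneg v hvs) le_rfl h zero_le_one one_lt_two hw'c
termination_by cs.length w
decreasing_by all_goals omega

theorem raGeomRep_smul_add_smul_nonneg {d : R} {t c : B} (htc : M t c = 0) {a b : ℤ}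
    (hb : 0 ≤ b) (hba : b < a) (hdt : ¬cs.IsRightDescent d t) :
    0 ≤ cs.raGeomRep hM d (a • single t 1 + b • single c 1) :=
  cs.raGeomRep_smul_add_smul_nonneg_of_le hM (fun v _ _ hvt => cs.raGeomRep_single_nonneg hM v hvt)
    le_rfl htc hb hba hdt

theorem raGeomRep_single_neg {w : R} {t : B} (hwt : cs.IsRightDescent w t) :
    cs.raGeomRep hM w (single t 1) < 0 := by
  have hw't : ¬cs.IsRightDescent (w * cs.simple t) t := by
    rwa [isRightDescent_iff_not_isRightDescent_mul] at hwt
  rw [← cs.simple_mul_simple_cancel_right (w := w) t, raGeomRep_mul_simple_apply,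
    M.raReflection_single_self, map_neg, neg_lt_zero]
  exact (cs.raGeomRep_single_nonneg hM _ hw't).lt_of_ne' (by simp)

theorem isRightDescent_iff_raGeomRep_single_neg {w : R} {t : B} :
    cs.IsRightDescent w t ↔ cs.raGeomRep hM w (single t 1) < 0 :=
  ⟨cs.raGeomRep_single_neg hM, fun h => by_contra fun hwt =>
    (cs.raGeomRep_single_nonneg hM w hwt).not_gt h⟩

end GeomRep

variable (hM : M.IsRightAngled)
include hM

theorem IsReduced.exists_eq_append_of_isRightDescent {ω : List B} (hω : cs.IsReduced ω) {t : B}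
    (ht : cs.IsRightDescent (cs.wordProd ω) t) :
    ∃ ω₁ ω₂, ω = ω₁ ++ t :: ω₂ ∧ ∀ b ∈ ω₂, M t b = 2 := by
  classical
  induction ω using List.reverseRecOn with
  | nil => exact absurd ht (cs.not_isRightDescent_one t)
  | append_singleton ω c ih =>
    have hω' : cs.IsReduced ω := by simpa using hω.take ω.length
    have hωc : ¬cs.IsRightDescent (cs.wordProd ω) c := by
      rw [not_isRightDescent_iff, ← wordProd_concat, List.concat_eq_append, hω, hω']
      simp
    rw [wordProd_append, wordProd_singleton] at ht
    rcases eq_or_ne c t with rfl | hct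
    · exact ⟨ω, [], rfl, by simp⟩
    rw [cs.isRightDescent_iff_raGeomRep_single_neg hM, raGeomRep_mul_simple_apply] at ht
    rcases hM c t hct with h | h
    · rw [M.raReflection_single_of_eq_two h,
        ← cs.isRightDescent_iff_raGeomRep_single_neg hM] at ht
      obtain ⟨ω₁, ω₂, rfl, hω₂⟩ := ih hω' ht
      refine ⟨ω₁, ω₂ ++ [c], by simp, fun b hb => ?_⟩
      rcases List.mem_append.mp hb with hb | hb
      · exact hω₂ b hb
      · rw [List.mem_singleton.mp hb, M.symmetric, h]
    · rw [M.raReflection_single_of_eq_zero h, add_comm, ← one_smul ℤ (single t 1)] at ht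
      exact absurd ht (cs.raGeomRep_smul_add_smul_nonneg hM h zero_le_one one_lt_two hωc).not_gt

theorem exists_eq_append_of_not_isReduced {ω : List B} (hω : ¬cs.IsReduced ω) :
    ∃ ω₁ ω₂ ω₃ t, ω = ω₁ ++ t :: (ω₂ ++ t :: ω₃) ∧ ∀ b ∈ ω₂, M t b = 2 := by
  induction ω using List.reverseRecOn with
  | nil => exact absurd (by simp [IsReduced]) hω
  | append_singleton ω c ih =>
    by_cases hω' : cs.IsReduced ω
    · have hωc : cs.IsRightDescent (cs.wordProd ω) c := by
        by_contra hωc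
        rw [not_isRightDescent_iff, hω'] at hωc
        exact hω (by simpa [IsReduced, wordProd_append] using hωc)
      obtain ⟨ω₁, ω₂, rfl, hω₂⟩ := hω'.exists_eq_append_of_isRightDescent cs hM hωc
      exact ⟨ω₁, ω₂, [], c, by simp, hω₂⟩
    · obtain ⟨ω₁, ω₂, ω₃, t, rfl, hω₂⟩ := ih hω'
      exact ⟨ω₁, ω₂, ω₃ ++ [c], t, by simp, hω₂⟩

end CoxeterSystem
namespace ArtinGroup

def of (M : CoxeterMatrix B) (s : B) : ArtinGroup M := PresentedGroup.of s

def syllableProd (M : CoxeterMatrix B) (L : List (B × ℤ)) : ArtinGroup M :=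
  (L.map fun p => of M p.1 ^ p.2).prod

variable {M : CoxeterMatrix B}

theorem commute_of {s t : B} (h : M s t = 2) : Commute (of M s) (of M t) := by
  have := PresentedGroup.one_of_mem (rels := artinRels M) ⟨s, t, h, rfl⟩
  simp only [map_mul, map_inv] at this
  exact commutatorElement_eq_one_iff_commute.mp this

@[simp]
theorem syllableProd_nil : syllableProd M [] = 1 := rfl

@[simp]
theorem syllableProd_cons (p : B × ℤ) (L : List (B × ℤ)) :
    syllableProd M (p :: L) = of M p.1 ^ p.2 * syllableProd M L := by
  simp [syllableProd]

@[simp]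
theorem syllableProd_append (L L' : List (B × ℤ)) :
    syllableProd M (L ++ L') = syllableProd M L * syllableProd M L' := by
  simp [syllableProd]

theorem map_syllableProd_append_singleton {G : Type*} [Group G] (φ : ArtinGroup M →* G)
    (L : List (B × ℤ)) (p : B × ℤ) :
    φ (syllableProd M (L ++ [p])) = φ (syllableProd M L) * φ (of M p.1) ^ p.2 := by
  simp

theorem exists_syllableProd_eq (g : ArtinGroup M) :
    ∃ L : List (B × ℤ), (∀ p ∈ L, p.2 ≠ 0) ∧ syllableProd M L = g := by
  obtain ⟨w, rfl⟩ := PresentedGroup.mk_surjective _ g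
  induction w using FreeGroup.induction_on with
  | C1 => exact ⟨[], by simp, rfl⟩
  | of s => exact ⟨[(s, 1)], by simp, by simp; rfl⟩
  | inv_of s _ => exact ⟨[(s, -1)], by simp, by simp; rfl⟩
  | mul x y hx hy =>
    obtain ⟨Lx, hLx, hx⟩ := hx
    obtain ⟨Ly, hLy, hy⟩ := hy
    refine ⟨Lx ++ Ly, fun p hp => (List.mem_append.mp hp).elim (hLx p) (hLy p), ?_⟩
    rw [syllableProd_append, hx, hy]
    exact (map_mul _ x y).symm

theorem syllableProd_merge (L₁ L₂ L₃ : List (B × ℤ)) {t : B} (e₁ e₂ : ℤ)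
    (hL₂ : ∀ p ∈ L₂, M t p.1 = 2) :
    syllableProd M (L₁ ++ (t, e₁) :: (L₂ ++ (t, e₂) :: L₃)) =
      syllableProd M (L₁ ++ L₂ ++ (t, e₁ + e₂) :: L₃) := by
  have hc : Commute (of M t ^ e₁) (syllableProd M L₂) :=
    Commute.list_prod_right _ _ fun y hy => by
      obtain ⟨p, hp, rfl⟩ := List.mem_map.mp hy
      exact (commute_of (hL₂ p hp)).zpow_zpow e₁ p.2
  simp only [syllableProd_append, syllableProd_cons, zpow_add, mul_assoc]
  rw [← mul_assoc (of M t ^ e₁), hc.eq, mul_assoc]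

theorem exists_shorter_syllableProd_eq {R : Type*} [Group R] (cs : CoxeterSystem M R)
    (hM : M.IsRightAngled) {L : List (B × ℤ)} (hL : ∀ p ∈ L, p.2 ≠ 0) (hred : ¬cs.IsReduced (L.map Prod.fst)) :
    ∃ L' : List (B × ℤ), L'.length < L.length ∧ (∀ p ∈ L', p.2 ≠ 0) ∧
      syllableProd M L' = syllableProd M L := by
  obtain ⟨ω₁, ω₂, ω₃, t, hω, hω₂⟩ := cs.exists_eq_append_of_not_isReduced hM hred
  obtain ⟨L₁, _, rfl, rfl, h₁⟩ := List.map_eq_append_iff.mp hω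
  obtain ⟨⟨t₁, e₁⟩, _, rfl, ht₁ : t₁ = t, h₂⟩ := List.map_eq_cons_iff.mp h₁
  obtain ⟨L₂, _, rfl, rfl, h₃⟩ := List.map_eq_append_iff.mp h₂
  obtain ⟨⟨t₂, e₂⟩, L₃, rfl, ht₂ : t₂ = t, rfl⟩ := List.map_eq_cons_iff.mp h₃
  subst t₁ t₂
  rw [syllableProd_merge _ _ _ _ _ fun p hp => hω₂ p.1 (List.mem_map_of_mem hp)]
  have hL' : ∀ p ∈ L₁ ++ L₂ ++ L₃, p.2 ≠ 0 := fun p hp => hL p (by simp at hp ⊢; tauto)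
  by_cases he : e₁ + e₂ = 0
  · exact ⟨L₁ ++ L₂ ++ L₃, by simp, hL', by simp [he]⟩
  · refine ⟨L₁ ++ L₂ ++ (t, e₁ + e₂) :: L₃, by simp, fun p hp => ?_, rfl⟩
    simp only [List.mem_append, List.mem_cons] at hp
    rcases hp with (hp | hp) | rfl | hp <;> first | exact he | exact hL' p (by simp [hp])

end ArtinGroup

theorem smul_one_add_smul_mul_sub_one {S A : Type*} [CommRing S] [Ring A] [Algebra S A] {q : S}
    {P : A} (hP : P * P = (q + 1) • P) (a c : S) :
    (a • 1 + c • P) * (P - 1) = (-a) • (1 : A) + (a + c * q) • P := by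
  rw [mul_sub, mul_one, add_mul, smul_mul_assoc, smul_mul_assoc, one_mul, hP]
  module

/-- With `P = (q + 1) • E` for an idempotent `E`, this is
`(P - 1) ^ e = (-1) ^ e + (q ^ e - (-1) ^ e) • E` with the division by `q + 1` cleared. -/
theorem exists_zpow_eq_of_mul_self_eq {S A : Type*} [CommRing S] [Ring A] [Algebra S[T;T⁻¹] A]
    {P : A} (hP : P * P = (T 1 + 1 : S[T;T⁻¹]) • P) (x : Aˣ) (hx : (x : A) = P - 1) (e : ℤ) :
    ∃ (k : ℤ) (c : S[T;T⁻¹]), ((x ^ e : Aˣ) : A) = (k : S[T;T⁻¹]) • 1 + c • P ∧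
      (T 1 + 1) * c = T e - (k : S[T;T⁻¹]) := by
  induction e using Int.induction_on with
  | zero => exact ⟨1, 0, by simp, by simp⟩
  | succ e ih =>
    obtain ⟨k, c, hxe, hc⟩ := ih
    refine ⟨-k, (k : S[T;T⁻¹]) + c * T 1, ?_, ?_⟩
    · rw [zpow_add_one, Units.val_mul, hxe, hx, smul_one_add_smul_mul_sub_one hP]
      push_cast; rfl
    · rw [T_add]
      push_cast
      linear_combination T 1 * hc
  | pred e ih =>
    obtain ⟨k, c, hxe, hc⟩ := ih
    have hT : (T (-1) * T 1 : S[T;T⁻¹]) = 1 := by rw [← T_add]; simp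
    refine ⟨-k, T (-1) * ((k : S[T;T⁻¹]) + c), ?_, ?_⟩
    · rw [zpow_sub_one, Units.val_mul, Units.mul_inv_eq_iff_eq_mul, hx, hxe,
        smul_one_add_smul_mul_sub_one hP]
      push_cast
      rw [neg_neg, show -(k : S[T;T⁻¹]) + T (-1) * ((k : S[T;T⁻¹]) + c) * T 1 = c by
        linear_combination ((k : S[T;T⁻¹]) + c) * hT]
    · rw [sub_eq_add_neg (-(e : ℤ)), T_add]
      push_cast
      linear_combination T (-1) * hc + (k : S[T;T⁻¹]) * hT

theorem LaurentPolynomial.T_sub_intCast_ne_zero {S : Type*} [CommRing S] [Nontrivial S] {e : ℤ}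
    (he : e ≠ 0) (k : ℤ) : (T e : S[T;T⁻¹]) - k ≠ 0 := by
  rw [sub_ne_zero, ← map_intCast (C : S →+* S[T;T⁻¹])]
  intro h
  have := congrArg (fun f : S[T;T⁻¹] => f.coeff e) h
  rw [T_apply, C_apply, if_pos rfl, if_neg he] at this
  exact one_ne_zero this


namespace CoxeterSystem

open ArtinGroup

variable {R : Type*} [Group R] {M : CoxeterMatrix B}

structure IsHeckeBasis {A H : Type*} [CommRing A] [Ring H] [Algebra A H]
    (cs : CoxeterSystem M R) (q : A) (T : Module.Basis R A H) : Prop where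
  one : T 1 = 1
  mul_simple_of_lt : ∀ (w : R) (i : B), cs.length w < cs.length (w * cs.simple i) →
    T w * T (cs.simple i) = T (w * cs.simple i)
  mul_simple_of_gt : ∀ (w : R) (i : B), cs.length (w * cs.simple i) < cs.length w →
    T w * T (cs.simple i) = q • T (w * cs.simple i) + (q - 1) • T w

namespace IsHeckeBasis

section

variable {A H : Type*} [CommRing A] [Ring H] [Algebra A H] {cs : CoxeterSystem M R} {q : A}
  {T : Module.Basis R A H}

theorem simple_mul_self (hT : cs.IsHeckeBasis q T) (i : B) :
    T (cs.simple i) * T (cs.simple i) = q • 1 + (q - 1) • T (cs.simple i) := by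
  rw [hT.mul_simple_of_gt _ i (by simp [cs.length_simple]), cs.simple_mul_simple_self, hT.one]

theorem repr_basis_mul_simple [DecidableEq R] (hT : cs.IsHeckeBasis q T) {v w : R} (i : B)
    (hvw : cs.length v < cs.length w) :
    T.repr (T v * T (cs.simple i)) w = if v = w * cs.simple i then 1 else 0 := by
  rcases lt_or_gt_of_ne (cs.length_mul_simple_ne v i).symm with h | h
  · rw [hT.mul_simple_of_lt v i h, T.repr_self, Finsupp.single_apply]
    exact if_congr ⟨fun h => by rw [← h, cs.simple_mul_simple_cancel_right],
      fun h => by rw [h, cs.simple_mul_simple_cancel_right]⟩ rfl rfl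
  · have hv : v ≠ w * cs.simple i := by
      rintro rfl
      rw [cs.simple_mul_simple_cancel_right] at h
      omega
    have hvi : v * cs.simple i ≠ w := by rintro rfl; omega
    have hvw' : v ≠ w := by rintro rfl; omega
    simp [hT.mul_simple_of_gt v i h, hv, hvi, hvw']

theorem repr_mul_simple (hT : cs.IsHeckeBasis q T) {Y : H} {n : ℕ}
    (hY : ∀ v, n < cs.length v → T.repr Y v = 0) {w : R} (hw : n < cs.length w) (i : B) :
    T.repr (Y * T (cs.simple i)) w = T.repr Y (w * cs.simple i) := by
  classical
  have hsupp : ∀ v ∈ (T.repr Y).support, cs.length v < cs.length w := fun v hv => by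
    by_contra h
    exact Finsupp.mem_support_iff.mp hv (hY v (by omega))
  conv_lhs => rw [← T.linearCombination_repr Y, Finsupp.linearCombination_apply, Finsupp.sum_mul,
    map_finsuppSum, Finsupp.sum_apply]
  rw [Finsupp.sum_congr (g2 := fun v a => if v = w * cs.simple i then a else 0) fun v hv => by
    rw [smul_mul_assoc, map_smul, Finsupp.smul_apply, hT.repr_basis_mul_simple i (hsupp v hv)]
    simp]
  rw [Finsupp.sum_ite_eq']
  split_ifs with h
  · rfl
  · exact (Finsupp.notMem_support_iff.mp h).symm

end

variable {H : Type*} [Ring H] [Algebra LaurentZ H] {cs : CoxeterSystem M R}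
  {T : Module.Basis R LaurentZ H}

theorem exists_zpow_eq (hT : cs.IsHeckeBasis qL T) {i : B} (x : Hˣ)
    (hx : (x : H) = T (cs.simple i)) (e : ℤ) :
    ∃ a c : LaurentZ, ((x ^ e : Hˣ) : H) = a • 1 + c • T (cs.simple i) ∧ (e ≠ 0 → c ≠ 0) := by
  have hP : (1 + T (cs.simple i)) * (1 + T (cs.simple i)) =
      (qL + 1) • (1 + T (cs.simple i)) := by
    rw [mul_add, add_mul, add_mul, hT.simple_mul_self, one_mul, mul_one, one_mul]
    module
  obtain ⟨k, c, hxe, hc⟩ := exists_zpow_eq_of_mul_self_eq hP x (by rw [hx]; abel) e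
  refine ⟨k + c, c, by rw [hxe]; module, fun he hc0 => ?_⟩
  exact T_sub_intCast_ne_zero he k (by rw [← hc, hc0, mul_zero])

theorem exists_repr_mul_zpow (hT : cs.IsHeckeBasis qL T) {i : B} (x : Hˣ)
    (hx : (x : H) = T (cs.simple i)) (e : ℤ) :
    ∃ c : LaurentZ, (e ≠ 0 → c ≠ 0) ∧ ∀ {Y : H} {n : ℕ},
      (∀ v, n < cs.length v → T.repr Y v = 0) → ∀ w, n < cs.length w →
        T.repr (Y * ((x ^ e : Hˣ) : H)) w = c * T.repr Y (w * cs.simple i) := by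
  obtain ⟨a, c, hxe, hc⟩ := hT.exists_zpow_eq x hx e
  refine ⟨c, hc, fun hY w hw => ?_⟩
  rw [hxe, mul_add, mul_smul_comm, mul_smul_comm, mul_one, map_add, map_smul, map_smul,
    Finsupp.add_apply, Finsupp.smul_apply, Finsupp.smul_apply, hY w hw,
    hT.repr_mul_simple hY hw, smul_zero, zero_add, smul_eq_mul]

variable {φ : ArtinGroup M →* Hˣ}

theorem repr_map_syllableProd_of_length_lt (hT : cs.IsHeckeBasis qL T)
    (hφ : ∀ s, (φ (of M s) : H) = T (cs.simple s)) (L : List (B × ℤ)) {w : R}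
    (hw : L.length < cs.length w) : T.repr (φ (syllableProd M L)) w = 0 := by
  induction L using List.reverseRecOn generalizing w with
  | nil =>
    have hw1 : w ≠ 1 := by rintro rfl; simp at hw
    simp [← hT.one, Ne.symm hw1]
  | append_singleton L p ih =>
    obtain ⟨c, -, hc⟩ := hT.exists_repr_mul_zpow _ (hφ p.1) p.2
    have := cs.length_mul_simple w p.1
    rw [map_syllableProd_append_singleton, Units.val_mul,
      hc (fun v hv => ih hv) w (by simp at hw; omega), ih (by simp at hw; omega), mul_zero]

theorem repr_map_syllableProd_wordProd_ne_zero (hT : cs.IsHeckeBasis qL T)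
    (hφ : ∀ s, (φ (of M s) : H) = T (cs.simple s)) (L : List (B × ℤ)) (hL : ∀ p ∈ L, p.2 ≠ 0)
    (hred : cs.IsReduced (L.map Prod.fst)) :
    T.repr (φ (syllableProd M L)) (cs.wordProd (L.map Prod.fst)) ≠ 0 := by
  induction L using List.reverseRecOn with
  | nil => simp [← hT.one]
  | append_singleton L p ih =>
    obtain ⟨c, hc0, hc⟩ := hT.exists_repr_mul_zpow _ (hφ p.1) p.2
    have hredL : cs.IsReduced (L.map Prod.fst) := by simpa using hred.take L.length
    rw [map_syllableProd_append_singleton, Units.val_mul,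
      hc (fun v hv => repr_map_syllableProd_of_length_lt hT hφ L hv) _ (by rw [hred]; simp),
      List.map_append, wordProd_append]
    simp only [List.map_cons, List.map_nil, wordProd_singleton, simple_mul_simple_cancel_right]
    exact mul_ne_zero (hc0 (hL p (by simp))) (ih (fun q hq => hL q (by simp [hq])) hredL)

theorem syllableProd_eq_one_of_map_eq_one (hT : cs.IsHeckeBasis qL T)
    (hφ : ∀ s, (φ (of M s) : H) = T (cs.simple s)) (hM : M.IsRightAngled)
    (L : List (B × ℤ)) (hL : ∀ p ∈ L, p.2 ≠ 0) (h : φ (syllableProd M L) = 1) :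
    syllableProd M L = 1 := by
  by_cases hred : cs.IsReduced (L.map Prod.fst)
  · rcases L.eq_nil_or_concat with rfl | ⟨L', p, rfl⟩
    · rfl
    have hW : cs.wordProd ((L'.concat p).map Prod.fst) ≠ 1 := by
      rw [Ne, ← cs.length_eq_zero_iff, hred]
      simp
    refine absurd ?_ (repr_map_syllableProd_wordProd_ne_zero hT hφ _ hL hred)
    rw [h, Units.val_one, ← hT.one, T.repr_self, Finsupp.single_eq_of_ne hW]
  · obtain ⟨L', hlen, hL', heq⟩ := exists_shorter_syllableProd_eq cs hM hL hred
    rw [← heq] at h ⊢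
    exact syllableProd_eq_one_of_map_eq_one hT hφ hM L' hL' h
termination_by L.length

end IsHeckeBasis

end CoxeterSystem

theorem stmt_19 {R : Type*} [Group R] {M : CoxeterMatrix B} (cs : CoxeterSystem M R)
    -- `(R, S)` is right-angled: all off-diagonal entries are `2` or `∞` (encoded as `0`)
    (hra : ∀ s t : B, s ≠ t → M s t = 2 ∨ M s t = 0)
    -- the Hecke algebra `H(R)`, presented by its standard basis and multiplication rules
    (H : Type*) [Ring H] [Algebra LaurentZ H] (T : Module.Basis R LaurentZ H)
    (hone : T 1 = 1)
    (hmul_lt : ∀ (w : R) (s : B), cs.length w < cs.length (w * cs.simple s) →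
      T w * T (cs.simple s) = T (w * cs.simple s))
    (hmul_gt : ∀ (w : R) (s : B), cs.length (w * cs.simple s) < cs.length w →
      T w * T (cs.simple s) = qL • T (w * cs.simple s) + (qL - 1) • T w)
    -- the group morphism `φ : R^A → H(R)*` determined by `φ(s) = T_s`
    (φ : ArtinGroup M →* Hˣ)
    (hφ : ∀ s : B, (φ (PresentedGroup.of s : ArtinGroup M) : H) = T (cs.simple s)) :
    Function.Injective φ := by
  refine (injective_iff_map_eq_one φ).mpr fun g hg => ?_
  obtain ⟨L, hL, rfl⟩ := ArtinGroup.exists_syllableProd_eq g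
  exact CoxeterSystem.IsHeckeBasis.syllableProd_eq_one_of_map_eq_one ⟨hone, hmul_lt, hmul_gt⟩ hφ
    hra L hL hg
end
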